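/- Let L be a finite lattice with a CU-labeling λ : Cov(L) → P. For every x ∈ L, the expression x = ⋁_{j ∈ D} j, where D is the set of join-irreducibles j of L with λ(j_*, j) ∈ λ↓(x), is the canonical join-representation of x. Dually, the expression x = ⋀_{m ∈ U} m, where U is the set of meet-irreducibles m of L with λ(m, m*) ∈ λ↑(x), is the canonical meet-representation of x. -/

import Mathlib

universe u v

/-- A lattice congruence on a lattice `L`: an equivalence relation compatible with
meets and joins. -/
structure LatticeCongruence (L : Type u) [Lattice L] : Type u where
  r : L → L → Prop
  refl : ∀ x, r x x
  symm : ∀ x y, r x y → r y x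
  trans : ∀ x y z, r x y → r y z → r x z
  inf_congr : ∀ x y z, r x y → r (x ⊓ z) (y ⊓ z)
  sup_congr : ∀ x y z, r x y → r (x ⊔ z) (y ⊔ z)

namespace LatticeCongruence

variable {L : Type u} [Lattice L]

theorem ext' {c d : LatticeCongruence L} (h : ∀ x y, c.r x y ↔ d.r x y) : c = d := by
  have hr : c.r = d.r := funext fun x => funext fun y => propext (h x y)
  cases c; cases d
  subst hr
  rfl

/-- Congruences are ordered by refinement. -/
instance : PartialOrder (LatticeCongruence L) where
  le c d := ∀ x y : L, c.r x y → d.r x y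
  le_refl c := fun _ _ h => h
  le_trans a b c hab hbc := fun x y h => hbc x y (hab x y h)
  le_antisymm a b hab hba := ext' fun x y => ⟨hab x y, hba x y⟩

/-- The join of two congruences. -/
def conSup (c d : LatticeCongruence L) : LatticeCongruence L where
  r x y := ∀ e : LatticeCongruence L, c ≤ e → d ≤ e → e.r x y
  refl := fun x e _ _ => e.refl x
  symm := fun x y h e hc hd => e.symm x y (h e hc hd)
  trans := fun x y z h h' e hc hd => e.trans x y z (h e hc hd) (h' e hc hd)
  inf_congr := fun x y z h e hc hd => e.inf_congr x y z (h e hc hd)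
  sup_congr := fun x y z h e hc hd => e.sup_congr x y z (h e hc hd)

/-- The meet of two congruences (their intersection). -/
def conInf (c d : LatticeCongruence L) : LatticeCongruence L where
  r x y := c.r x y ∧ d.r x y
  refl := fun x => ⟨c.refl x, d.refl x⟩
  symm := fun x y h => ⟨c.symm x y h.1, d.symm x y h.2⟩
  trans := fun x y z h h' => ⟨c.trans x y z h.1 h'.1, d.trans x y z h.2 h'.2⟩
  inf_congr := fun x y z h => ⟨c.inf_congr x y z h.1, d.inf_congr x y z h.2⟩
  sup_congr := fun x y z h => ⟨c.sup_congr x y z h.1, d.sup_congr x y z h.2⟩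

/-- The lattice `Con(L)` of congruences of `L`. -/
instance : Lattice (LatticeCongruence L) where
  sup := conSup
  le_sup_left c d := fun x y h e hc _ => hc x y h
  le_sup_right c d := fun x y h e _ hd => hd x y h
  sup_le a b c hac hbc := fun x y h => h c hac hbc
  inf := conInf
  inf_le_left c d := fun _ _ h => h.1
  inf_le_right c d := fun _ _ h => h.2
  le_inf a b c hab hac := fun x y h => ⟨hab x y h, hac x y h⟩

/-- `conGen a b` is the finest lattice congruence identifying `a` and `b`. -/
def conGen (a b : L) : LatticeCongruence L where
  r x y := ∀ e : LatticeCongruence L, e.r a b → e.r x y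
  refl := fun x e _ => e.refl x
  symm := fun x y h e he => e.symm x y (h e he)
  trans := fun x y z h h' e he => e.trans x y z (h e he) (h' e he)
  inf_congr := fun x y z h e he => e.inf_congr x y z (h e he)
  sup_congr := fun x y z h e he => e.sup_congr x y z (h e he)

/-- The setoid underlying a lattice congruence. -/
def setoid (c : LatticeCongruence L) : Setoid L :=
  ⟨c.r, ⟨c.refl, fun h => c.symm _ _ h, fun h h' => c.trans _ _ _ h h'⟩⟩

/-- The quotient of `L` by a lattice congruence. -/
def Quo (c : LatticeCongruence L) : Type u := Quotient c.setoid

/-- The canonical quotient map `L → L/Θ`. -/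
def mkQ (c : LatticeCongruence L) (x : L) : c.Quo := Quotient.mk c.setoid x

variable (c : LatticeCongruence L)

theorem sup_congr₂ {x x' y y' : L} (hx : c.r x x') (hy : c.r y y') :
    c.r (x ⊔ y) (x' ⊔ y') := by
  have h1 : c.r (x ⊔ y) (x' ⊔ y) := c.sup_congr x x' y hx
  have h2 : c.r (y ⊔ x') (y' ⊔ x') := c.sup_congr y y' x' hy
  rw [sup_comm y x', sup_comm y' x'] at h2
  exact c.trans _ _ _ h1 h2

theorem inf_congr₂ {x x' y y' : L} (hx : c.r x x') (hy : c.r y y') :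
    c.r (x ⊓ y) (x' ⊓ y') := by
  have h1 : c.r (x ⊓ y) (x' ⊓ y) := c.inf_congr x x' y hx
  have h2 : c.r (y ⊓ x') (y' ⊓ x') := c.inf_congr y y' x' hy
  rw [inf_comm y x', inf_comm y' x'] at h2
  exact c.trans _ _ _ h1 h2

instance : Max c.Quo :=
  ⟨Quotient.lift₂ (fun x y => c.mkQ (x ⊔ y))
    (fun _ _ _ _ hx hy => Quotient.sound (c.sup_congr₂ hx hy))⟩

instance : Min c.Quo :=
  ⟨Quotient.lift₂ (fun x y => c.mkQ (x ⊓ y))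
    (fun _ _ _ _ hx hy => Quotient.sound (c.inf_congr₂ hx hy))⟩

theorem quo_sup_comm (a b : c.Quo) : a ⊔ b = b ⊔ a :=
  Quotient.inductionOn₂ a b fun x y => congrArg (Quotient.mk c.setoid) (sup_comm x y)

theorem quo_sup_assoc (a b d : c.Quo) : a ⊔ b ⊔ d = a ⊔ (b ⊔ d) :=
  Quotient.inductionOn₃ a b d fun x y z => congrArg (Quotient.mk c.setoid) (sup_assoc x y z)

theorem quo_inf_comm (a b : c.Quo) : a ⊓ b = b ⊓ a :=
  Quotient.inductionOn₂ a b fun x y => congrArg (Quotient.mk c.setoid) (inf_comm x y)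

theorem quo_inf_assoc (a b d : c.Quo) : a ⊓ b ⊓ d = a ⊓ (b ⊓ d) :=
  Quotient.inductionOn₃ a b d fun x y z => congrArg (Quotient.mk c.setoid) (inf_assoc x y z)

theorem quo_sup_inf_self (a b : c.Quo) : a ⊔ a ⊓ b = a :=
  Quotient.inductionOn₂ a b fun x y =>
    congrArg (Quotient.mk c.setoid) (sup_inf_self (a := x) (b := y))

theorem quo_inf_sup_self (a b : c.Quo) : a ⊓ (a ⊔ b) = a :=
  Quotient.inductionOn₂ a b fun x y =>
    congrArg (Quotient.mk c.setoid) (inf_sup_self (a := x) (b := y))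

/-- The quotient lattice `L/Θ`. -/
instance : Lattice c.Quo :=
  Lattice.mk' c.quo_sup_comm c.quo_sup_assoc c.quo_inf_comm c.quo_inf_assoc
    c.quo_sup_inf_self c.quo_inf_sup_self

end LatticeCongruence

open LatticeCongruence in
/-- A finite lattice is congruence-uniform if `j ↦ con(j₊, j)` is a bijection from
join-irreducibles of `L` onto join-irreducibles of `Con(L)`, and dually
`m ↦ con(m, m⁺)` is a bijection from meet-irreducibles of `L` onto
meet-irreducibles of `Con(L)`. -/
def IsCongruenceUniform (L : Type u) [Lattice L] : Prop :=
  (∀ j : L, SupIrred j → ∀ a : L, a ⋖ j → SupIrred (conGen a j)) ∧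
  (∀ j j' a a' : L, SupIrred j → SupIrred j' → a ⋖ j → a' ⋖ j' →
      conGen a j = conGen a' j' → j = j') ∧
  (∀ Θ : LatticeCongruence L, SupIrred Θ → ∃ j a : L, SupIrred j ∧ a ⋖ j ∧ conGen a j = Θ) ∧
  (∀ m : L, InfIrred m → ∀ b : L, m ⋖ b → InfIrred (conGen m b)) ∧
  (∀ m m' b b' : L, InfIrred m → InfIrred m' → m ⋖ b → m' ⋖ b' →
      conGen m b = conGen m' b' → m = m') ∧
  (∀ Θ : LatticeCongruence L, InfIrred Θ → ∃ m b : L, InfIrred m ∧ m ⋖ b ∧ conGen m b = Θ)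

/-- `C` is a maximal chain of the closed interval `[a, b]`. -/
def IsMaxChainIn {L : Type u} [Lattice L] (a b : L) (C : Set L) : Prop :=
  C ⊆ Set.Icc a b ∧ IsChain (· ≤ ·) C ∧
    ∀ D : Set L, D ⊆ Set.Icc a b → IsChain (· ≤ ·) D → C ⊆ D → C = D

/-- `u` and `v` are consecutive elements of the chain `C` (the covering pairs of `C`
viewed as a poset in its own right). -/
def ConsecIn {L : Type u} [Lattice L] (C : Set L) (u v : L) : Prop :=
  u ∈ C ∧ v ∈ C ∧ u < v ∧ ∀ w ∈ C, ¬(u < w ∧ w < v)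

/-- `lam` is a CN-labeling of the lattice `L` (with values in the poset `P`):
the defining conditions (CN1), (CN2), (CN3) hold in `L` and in its order-dual. -/
def IsCNLabeling {L : Type u} [Lattice L] {P : Type v} [PartialOrder P]
    (lam : L → L → P) : Prop :=
  (∀ x y z : L, x ≠ y → z ⋖ x → z ⋖ y →
    ∀ C₁ C₂ : Set L, IsMaxChainIn z (x ⊔ y) C₁ → IsMaxChainIn z (x ⊔ y) C₂ →
      x ∈ C₁ → y ∈ C₂ →
      (∀ x' ∈ C₁, x' ⋖ (x ⊔ y) → lam x' (x ⊔ y) = lam z y) ∧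
      (∀ y' ∈ C₂, y' ⋖ (x ⊔ y) → lam y' (x ⊔ y) = lam z x) ∧
      (∀ u v : L, ConsecIn C₁ u v → z < u → v < x ⊔ y →
        lam z x < lam u v ∧ lam z y < lam u v) ∧
      (∀ u v u' v' : L, ConsecIn C₁ u v → ConsecIn C₁ u' v' →
        lam u v = lam u' v' → u = u' ∧ v = v')) ∧
  (∀ x y z : L, x ≠ y → x ⋖ z → y ⋖ z →
    ∀ C₁ C₂ : Set L, IsMaxChainIn (x ⊓ y) z C₁ → IsMaxChainIn (x ⊓ y) z C₂ →
      x ∈ C₁ → y ∈ C₂ →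
      (∀ x' ∈ C₁, (x ⊓ y) ⋖ x' → lam (x ⊓ y) x' = lam y z) ∧
      (∀ y' ∈ C₂, (x ⊓ y) ⋖ y' → lam (x ⊓ y) y' = lam x z) ∧
      (∀ u v : L, ConsecIn C₁ u v → x ⊓ y < u → v < z →
        lam x z < lam u v ∧ lam y z < lam u v) ∧
      (∀ u v u' v' : L, ConsecIn C₁ u v → ConsecIn C₁ u' v' →
        lam u v = lam u' v' → u = u' ∧ v = v'))

/-- `lam` is a CU-labeling of the lattice `L`: a CN-labeling satisfying (CU1), (CU2). -/
def IsCULabeling {L : Type u} [Lattice L] {P : Type v} [PartialOrder P]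
    (lam : L → L → P) : Prop :=
  IsCNLabeling lam ∧
  (∀ j j' a a' : L, SupIrred j → SupIrred j' → a ⋖ j → a' ⋖ j' → j ≠ j' →
    lam a j ≠ lam a' j') ∧
  (∀ m m' b b' : L, InfIrred m → InfIrred m' → m ⋖ b → m' ⋖ b' → m ≠ m' →
    lam m b ≠ lam m' b')

/-- `λ↓(x)`: the set of labels of covering pairs below `x`. -/
def lamDown {L : Type u} [Lattice L] {P : Type v} (lam : L → L → P) (x : L) : Set P :=
  {p | ∃ y, y ⋖ x ∧ lam y x = p}

/-- `λ↑(x)`: the set of labels of covering pairs above `x`. -/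
def lamUp {L : Type u} [Lattice L] {P : Type v} (lam : L → L → P) (x : L) : Set P :=
  {p | ∃ y, x ⋖ y ∧ lam x y = p}

/-- Covering pairs `(x, y)` and `(w, z)` are associates. -/
def AreAssociates {L : Type u} [Lattice L] (x y w z : L) : Prop :=
  (y ⊓ w = x ∧ y ⊔ w = z) ∨ (x ⊓ z = w ∧ x ⊔ z = y)

/-- `x = ⋁ A` is the canonical join-representation of `x`. -/
def IsCanonicalJoinRep {L : Type u} [Lattice L] (A : Set L) (x : L) : Prop :=
  (∀ a ∈ A, SupIrred a) ∧ IsLUB A x ∧ (∀ B ⊂ A, ¬IsLUB B x) ∧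
    ∀ B : Set L, (∀ b ∈ B, SupIrred b) → IsLUB B x → (∀ B' ⊂ B, ¬IsLUB B' x) →
      ∀ a ∈ A, ∃ b ∈ B, a ≤ b

/-- `x = ⋀ A` is the canonical meet-representation of `x`. -/
def IsCanonicalMeetRep {L : Type u} [Lattice L] (A : Set L) (x : L) : Prop :=
  (∀ a ∈ A, InfIrred a) ∧ IsGLB A x ∧ (∀ B ⊂ A, ¬IsGLB B x) ∧
    ∀ B : Set L, (∀ b ∈ B, InfIrred b) → IsGLB B x → (∀ B' ⊂ B, ¬IsGLB B' x) →
      ∀ a ∈ A, ∃ b ∈ B, b ≤ a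

/-!
Call covers `j' ⋖ j` and `y ⋖ x` perspective if `j ⊓ y = j'` and `j ⊔ y = x`. The CN axioms
force perspective covers to carry equal labels: for a lower cover `v ≥ j` of `x` other than `y`,
the interval `[v ⊓ y, x]` moves the question to a cover strictly below `x` whose label is either
`λ(y, x)` (CN1) or larger than it (CN2), so induction on `x` gives `λ(y, x) ≤ λ(j', j)`, and the
order-dual argument gives the reverse inequality.

In a finite lattice every cover `y ⋖ x` is perspective to `j_* ⋖ j` for a join-irreducible `j`
below any prescribed `b ≤ x` with `b ≰ y` (a minimal `j ≤ b` with `j ≰ y`). By (CU1) the label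
`λ(y, x)` determines `j`, so `j` lies below every such `b`. This makes `x` the join of the set `D`
of the theorem and puts `D` below every join-representation of `x`. Applied to a cover
`y ⊓ y₀ ⋖ w ≤ y₀`, which CN1 labels `λ(y, x)`, it shows that removing from `D` the element
labelled `λ(y₀, x)` leaves a set below `y₀`. CN- and CU-labelings are self-dual notions, so the meet statement is the join statement in
`Lᵒᵈ`.
-/

open OrderDual

section Covers

variable {L : Type u} [Lattice L]

theorem CovBy.sup_eq_of_not_le {x y b : L} (h : y ⋖ x) (hbx : b ≤ x) (hby : ¬b ≤ y) :
    b ⊔ y = x :=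
  (h.eq_or_eq le_sup_right (sup_le hbx h.le)).resolve_left fun e => hby (e ▸ le_sup_left)

theorem CovBy.inf_eq_of_not_le {a a' c : L} (h : a' ⋖ a) (hc : a' ≤ c) (hac : ¬a ≤ c) :
    a ⊓ c = a' :=
  (h.eq_or_eq (le_inf h.le hc) inf_le_left).resolve_right fun e => hac (e ▸ inf_le_right)

theorem exists_supIrred_le_inf_eq_sup_eq [Finite L] {x y b : L} (hyx : y ⋖ x) (hbx : b ≤ x)
    (hby : ¬b ≤ y) : ∃ j j', j ≤ b ∧ SupIrred j ∧ j' ⋖ j ∧ j ⊓ y = j' ∧ j ⊔ y = x := by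
  obtain ⟨j, ⟨hjb, hjy⟩, hmin⟩ :=
    (Set.toFinite {c | c ≤ b ∧ ¬c ≤ y}).exists_minimal ⟨b, le_rfl, hby⟩
  have below : ∀ c < j, c ≤ y := fun c hc =>
    not_not.1 fun hcy => hc.not_ge (hmin ⟨hc.le.trans hjb, hcy⟩ hc.le)
  have hjy' : j ⊓ y < j := inf_le_left.lt_of_ne fun e => hjy (e ▸ inf_le_right)
  obtain ⟨j', hj'y, hj'⟩ := exists_le_covBy_of_lt hjy'
  have hinf : j ⊓ y = j' := le_antisymm hj'y (le_inf hj'.le (below j' hj'.lt))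
  refine ⟨j, j', hjb, ⟨fun hj => hj.not_lt hjy', fun c d hcd => ?_⟩, hj', hinf,
    hyx.sup_eq_of_not_le (hjb.trans hbx) hjy⟩
  by_contra! hne
  exact hjy (hcd ▸ sup_le (below c ((hcd ▸ le_sup_left).lt_of_ne hne.1))
    (below d ((hcd ▸ le_sup_right).lt_of_ne hne.2)))

end Covers

section Chains

variable {L : Type u} [Lattice L]

theorem exists_isMaxChainIn_superset [Finite L] {a b : L} {C₀ : Set L}
    (hC₀ : C₀ ⊆ Set.Icc a b) (hchain : IsChain (· ≤ ·) C₀) :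
    ∃ C, IsMaxChainIn a b C ∧ C₀ ⊆ C := by
  obtain ⟨C, ⟨hC₀C, hCab, hCchain⟩, hmax⟩ :=
    (Set.toFinite {D : Set L | C₀ ⊆ D ∧ D ⊆ Set.Icc a b ∧ IsChain (· ≤ ·) D}).exists_maximal
      ⟨C₀, subset_rfl, hC₀, hchain⟩
  exact ⟨C, ⟨hCab, hCchain, fun D hDab hDchain hCD =>
    hCD.antisymm (hmax ⟨hC₀C.trans hCD, hDab, hDchain⟩ hCD)⟩, hC₀C⟩

theorem consecIn_of_covBy {C : Set L} {u v : L} (hu : u ∈ C) (hv : v ∈ C) (h : u ⋖ v) :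
    ConsecIn C u v :=
  ⟨hu, hv, h.lt, fun _ _ hw => h.2 hw.1 hw.2⟩

theorem IsMaxChainIn.ofDual {a b : Lᵒᵈ} {C : Set Lᵒᵈ} (h : IsMaxChainIn a b C) :
    IsMaxChainIn (ofDual b) (ofDual a) (toDual ⁻¹' C) :=
  ⟨fun _ hc => (h.1 hc).symm, h.2.1.symm, fun D hD hDchain hCD =>
    h.2.2 (OrderDual.ofDual ⁻¹' D) (fun _ hc => (hD hc).symm) hDchain.symm hCD⟩

theorem ConsecIn.ofDual {C : Set Lᵒᵈ} {u v : Lᵒᵈ} (h : ConsecIn C u v) :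
    ConsecIn (toDual ⁻¹' C) (ofDual v) (ofDual u) :=
  ⟨h.2.1, h.1, h.2.2.1, fun w hw hwuv => h.2.2.2 w hw hwuv.symm⟩

end Chains

section Labelings

variable {L : Type u} [Lattice L] {P : Type v}

def dualLabeling (lam : L → L → P) : Lᵒᵈ → Lᵒᵈ → P :=
  fun a b => lam (ofDual b) (ofDual a)

theorem lamDown_dualLabeling (lam : L → L → P) (x : L) :
    lamDown (dualLabeling lam) (toDual x) = lamUp lam x := by
  ext p
  simp [lamDown, lamUp, dualLabeling, toDual_covBy_toDual_iff]

theorem isCanonicalJoinRep_toDual_iff {A : Set L} {x : L} :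
    IsCanonicalJoinRep (L := Lᵒᵈ) (ofDual ⁻¹' A) (toDual x) ↔ IsCanonicalMeetRep A x :=
  Iff.rfl

variable [PartialOrder P] {lam : L → L → P}

theorem IsCNLabeling.dual (h : IsCNLabeling lam) : IsCNLabeling (dualLabeling lam) := by
  refine ⟨fun x y z hxy hzx hzy C₁ C₂ h₁ h₂ hx hy => ?_,
    fun x y z hxy hxz hyz C₁ C₂ h₁ h₂ hx hy => ?_⟩
  · obtain ⟨h1, h2, h3, h4⟩ := h.2 x y z hxy hzx.ofDual hzy.ofDual _ _ h₁.ofDual h₂.ofDual hx hy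
    exact ⟨fun x' hx' hc => h1 x' hx' hc.ofDual, fun y' hy' hc => h2 y' hy' hc.ofDual,
      fun u v huv hu hv => h3 v u huv.ofDual hv hu,
      fun u v u' v' huv huv' he => (h4 v u v' u' huv.ofDual huv'.ofDual he).symm⟩
  · obtain ⟨h1, h2, h3, h4⟩ := h.1 x y z hxy hxz.ofDual hyz.ofDual _ _ h₁.ofDual h₂.ofDual hx hy
    exact ⟨fun x' hx' hc => h1 x' hx' hc.ofDual, fun y' hy' hc => h2 y' hy' hc.ofDual,
      fun u v huv hu hv => h3 v u huv.ofDual hv hu,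
      fun u v u' v' huv huv' he => (h4 v u v' u' huv.ofDual huv'.ofDual he).symm⟩

theorem IsCULabeling.dual (h : IsCULabeling lam) : IsCULabeling (dualLabeling lam) :=
  ⟨h.1.dual, fun j j' a a' hj hj' ha ha' hne => h.2.2 j j' a a' hj hj' ha.ofDual ha'.ofDual hne,
    fun m m' b b' hm hm' hb hb' hne => h.2.1 m m' b b' hm hm' hb.ofDual hb'.ofDual hne⟩

theorem IsCULabeling.eq_of_lam_eq (hlam : IsCULabeling lam) {j j' k k' : L} (hj : SupIrred j)
    (hk : SupIrred k) (hj' : j' ⋖ j) (hk' : k' ⋖ k) (h : lam j' j = lam k' k) : j = k := by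
  by_contra hne
  exact hlam.2.1 j k j' k' hj hk hj' hk' hne h

end Labelings

section Perspectivity

variable {L : Type u} [Lattice L] [Finite L] {P : Type v} [PartialOrder P] {lam : L → L → P}

theorem IsCNLabeling.lam_inf_covBy_eq (hCN : IsCNLabeling lam) {x y z w : L} (hx : x ⋖ z)
    (hy : y ⋖ z) (hxy : x ≠ y) (hw : x ⊓ y ⋖ w) (hwx : w ≤ x) : lam (x ⊓ y) w = lam y z := by
  obtain ⟨C₁, hC₁, hwxC₁⟩ := exists_isMaxChainIn_superset (a := x ⊓ y) (b := z)
    (C₀ := {w, x}) (by simp [Set.insert_subset_iff, hw.le, hwx.trans hx.le, hx.le])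
    (IsChain.pair hwx)
  obtain ⟨C₂, hC₂, hyC₂⟩ := exists_isMaxChainIn_superset (a := x ⊓ y) (b := z)
    (C₀ := {y}) (by simp [hy.le]) Set.subsingleton_singleton.isChain
  exact (hCN.2 x y z hxy hx hy C₁ C₂ hC₁ hC₂ (hwxC₁ (by simp)) (hyC₂ rfl)).1 w
    (hwxC₁ (by simp)) hw

theorem IsCNLabeling.lam_lt_of_inf_lt (hCN : IsCNLabeling lam) {x y z u v : L} (hx : x ⋖ z)
    (hy : y ⋖ z) (hxy : x ≠ y) (huv : u ⋖ v) (hu : x ⊓ y < u) (hvx : v ≤ x) :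
    lam y z < lam u v := by
  obtain ⟨C₁, hC₁, huvxC₁⟩ := exists_isMaxChainIn_superset (a := x ⊓ y) (b := z)
    (C₀ := {u, v, x})
    (by simp [Set.insert_subset_iff, hu.le, huv.le.trans (hvx.trans hx.le),
      (hu.trans huv.lt).le, hvx.trans hx.le, hx.le])
    ((IsChain.pair hvx).insert fun c hc _ => by
      rcases hc with rfl | rfl
      · exact Or.inl huv.le
      · exact Or.inl (huv.le.trans hvx))
  obtain ⟨C₂, hC₂, hyC₂⟩ := exists_isMaxChainIn_superset (a := x ⊓ y) (b := z)
    (C₀ := {y}) (by simp [hy.le]) Set.subsingleton_singleton.isChain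
  exact ((hCN.2 x y z hxy hx hy C₁ C₂ hC₁ hC₂ (huvxC₁ (by simp)) (hyC₂ rfl)).2.2.1 u v
    (consecIn_of_covBy (huvxC₁ (by simp)) (huvxC₁ (by simp)) huv) hu
    (hvx.trans_lt hx.lt)).2

theorem IsCNLabeling.lam_le_of_inf_eq_sup_eq (hCN : IsCNLabeling lam) {a a' z t : L}
    (hzt : z ⋖ t) (ha : a' ⋖ a) (hinf : a ⊓ z = a') (hsup : a ⊔ z = t) :
    lam z t ≤ lam a' a := by
  induction t using WellFoundedLT.induction generalizing z with
  | ind t IH =>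
  rcases (show a ≤ t from hsup ▸ le_sup_left).eq_or_lt with rfl | hat
  · rw [inf_eq_right.2 hzt.le] at hinf
    rw [hinf]
  obtain ⟨v, hav, hvt⟩ := exists_le_covBy_of_lt hat
  have haz : ¬a ≤ z := fun h => ha.lt.ne (by rw [← hinf, inf_eq_left.2 h])
  have hvz : v ≠ z := fun e => haz (e ▸ hav)
  set m := v ⊓ z
  have ha'm : a' ≤ m := le_inf (ha.le.trans hav) (hinf ▸ inf_le_right)
  have ham : ¬a ≤ m := fun h => haz (h.trans inf_le_right)
  have hamv : a ⊔ m ≤ v := sup_le hav inf_le_left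
  obtain ⟨w, hmw, hw⟩ :=
    exists_covBy_le_of_lt (le_sup_right.lt_of_ne fun e => ham (le_sup_left.trans e.ge))
  have hlab : lam m w = lam z t := hCN.lam_inf_covBy_eq hvt hzt hvz hmw (hw.trans hamv)
  rcases hw.eq_or_lt with rfl | hw
  · rw [← hlab]
    exact IH _ (hamv.trans_lt hvt.lt) hmw (ha.inf_eq_of_not_le ha'm ham) rfl
  · obtain ⟨y, hwy, hy⟩ := exists_le_covBy_of_lt hw
    have hay : ¬a ≤ y := fun h => hy.lt.not_ge (sup_le h (hmw.le.trans hwy))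
    calc lam z t ≤ lam y (a ⊔ m) :=
          (hCN.lam_lt_of_inf_lt hvt hzt hvz hy (hmw.lt.trans_le hwy) hamv).le
      _ ≤ lam a' a := IH _ (hamv.trans_lt hvt.lt) hy
          (ha.inf_eq_of_not_le (ha'm.trans (hmw.le.trans hwy)) hay)
          (hy.sup_eq_of_not_le le_sup_left hay)

theorem IsCNLabeling.lam_eq_of_inf_eq_sup_eq (hCN : IsCNLabeling lam) {a a' z t : L}
    (hzt : z ⋖ t) (ha : a' ⋖ a) (hinf : a ⊓ z = a') (hsup : a ⊔ z = t) :
    lam a' a = lam z t :=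
  le_antisymm
    (hCN.dual.lam_le_of_inf_eq_sup_eq (a := toDual z) (a' := toDual t) ha.toDual hzt.toDual
      ((sup_comm z a).trans hsup) ((inf_comm z a).trans hinf))
    (hCN.lam_le_of_inf_eq_sup_eq hzt ha hinf hsup)

end Perspectivity

section CanonicalRepresentations

variable {L : Type u} [Lattice L] [Finite L] {P : Type v} [PartialOrder P] {lam : L → L → P}

theorem IsCULabeling.le_of_lam_eq (hlam : IsCULabeling lam) {j j' x y b : L}
    (hj : SupIrred j) (hj' : j' ⋖ j) (hyx : y ⋖ x) (hlab : lam j' j = lam y x) (hbx : b ≤ x)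
    (hby : ¬b ≤ y) : j ≤ b := by
  obtain ⟨k, k', hkb, hk, hk', hinf, hsup⟩ := exists_supIrred_le_inf_eq_sup_eq hyx hbx hby
  rwa [hlam.eq_of_lam_eq hj hk hj' hk'
    (hlab.trans (hlam.1.lam_eq_of_inf_eq_sup_eq hyx hk' hinf hsup).symm)]

theorem IsCULabeling.le_of_lam_eq_of_ne (hlam : IsCULabeling lam) {j j' x y y₀ : L}
    (hj : SupIrred j) (hj' : j' ⋖ j) (hyx : y ⋖ x) (hy₀x : y₀ ⋖ x) (hne : y₀ ≠ y)
    (hlab : lam j' j = lam y x) : j ≤ y₀ := by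
  have hm : y₀ ⊓ y < y₀ := inf_le_left.lt_of_ne fun e =>
    hne ((hy₀x.eq_or_eq (inf_eq_left.1 e) hyx.le).resolve_right hyx.lt.ne).symm
  obtain ⟨w, hw, hwy₀⟩ := exists_covBy_le_of_lt hm
  have hlab' : lam j' j = lam (y₀ ⊓ y) w :=
    hlab.trans (hlam.1.lam_inf_covBy_eq hy₀x hyx hne hw hwy₀).symm
  exact (hlam.le_of_lam_eq hj hj' hw hlab' le_rfl hw.lt.not_ge).trans hwy₀

theorem IsCULabeling.isCanonicalJoinRep (hlam : IsCULabeling lam) (x : L) :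
    IsCanonicalJoinRep {j | SupIrred j ∧ ∃ a, a ⋖ j ∧ lam a j ∈ lamDown lam x} x := by
  set D := {j | SupIrred j ∧ ∃ a, a ⋖ j ∧ lam a j ∈ lamDown lam x}
  have exists_mem : ∀ y, y ⋖ x → ∃ j ∈ D, ¬j ≤ y := by
    intro y hyx
    obtain ⟨j, j', -, hj, hj', hinf, hsup⟩ :=
      exists_supIrred_le_inf_eq_sup_eq hyx le_rfl hyx.lt.not_ge
    exact ⟨j, ⟨hj, j', hj', y, hyx, (hlam.1.lam_eq_of_inf_eq_sup_eq hyx hj' hinf hsup).symm⟩,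
      fun h => hj'.lt.ne (hinf.symm.trans (inf_eq_left.2 h))⟩
  have upper : x ∈ upperBounds D := fun j ⟨hj, j', hj', y, hyx, hlab⟩ =>
    hlam.le_of_lam_eq hj hj' hyx hlab.symm le_rfl hyx.lt.not_ge
  have hLUB : IsLUB D x := ⟨upper, fun u hu => by
    by_contra hxu
    obtain ⟨y, hy, hyx⟩ :=
      exists_le_covBy_of_lt (inf_le_left.lt_of_ne fun e => hxu (inf_eq_left.1 e))
    obtain ⟨j, hjD, hjy⟩ := exists_mem y hyx
    exact hjy ((le_inf (upper hjD) (hu hjD)).trans hy)⟩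
  refine ⟨fun j hj => hj.1, hLUB, fun B hBD hB => ?_, fun B _ hB _ j hj => ?_⟩
  · obtain ⟨j₀, ⟨hj₀, j₀', hj₀', y₀, hy₀x, hlab₀⟩, hj₀B⟩ := Set.exists_of_ssubset hBD
    refine hy₀x.lt.not_ge (hB.2 fun b hb => ?_)
    obtain ⟨hb, b', hb', y, hyx, hlab⟩ := hBD.subset hb
    refine hlam.le_of_lam_eq_of_ne hb hb' hyx hy₀x (fun e => hj₀B ?_) hlab.symm
    subst e
    rwa [← hlam.eq_of_lam_eq hb hj₀ hb' hj₀' (hlab.symm.trans hlab₀)]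
  · obtain ⟨hj, j', hj', y, hyx, hlab⟩ := hj
    obtain ⟨b, hbB, hby⟩ : ∃ b ∈ B, ¬b ≤ y := by
      by_contra! h
      exact hyx.lt.not_ge (hB.2 h)
    exact ⟨b, hbB, hlam.le_of_lam_eq hj hj' hyx hlab.symm (hB.1 hbB) hby⟩

theorem IsCULabeling.isCanonicalMeetRep (hlam : IsCULabeling lam) (x : L) :
    IsCanonicalMeetRep {m | InfIrred m ∧ ∃ b, m ⋖ b ∧ lam m b ∈ lamUp lam x} x := by
  refine isCanonicalJoinRep_toDual_iff.1 ?_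
  convert hlam.dual.isCanonicalJoinRep (toDual x) using 1
  ext m
  obtain ⟨m, rfl⟩ := toDual.surjective m
  simp [lamDown_dualLabeling, dualLabeling, OrderDual.exists, toDual_covBy_toDual_iff]

end CanonicalRepresentations

/-- In a finite lattice with a CU-labeling, the set of
join-irreducibles `j` with `λ(j₊, j) ∈ λ↓(x)` is the canonical join-representation
of `x`, and dually for the canonical meet-representation. -/
theorem cu_labeling_canonical_representations
    {L : Type u} [Lattice L] [Fintype L] {P : Type v} [PartialOrder P]
    (lam : L → L → P) (hlam : IsCULabeling lam) (x : L) :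
    IsCanonicalJoinRep {j : L | SupIrred j ∧ ∃ a, a ⋖ j ∧ lam a j ∈ lamDown lam x} x ∧
      IsCanonicalMeetRep {m : L | InfIrred m ∧ ∃ b, m ⋖ b ∧ lam m b ∈ lamUp lam x} x :=
  ⟨hlam.isCanonicalJoinRep x, hlam.isCanonicalMeetRep x⟩
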